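/- Let Γ be a totally ordered abelian group and D a domain graded by Γ_{≥0}, i.e. D = ⊕_{λ ≥ 0} D_λ. Then any homogeneous element x ∈ D of positive degree is not Egyptian (x ∉ R(D)). In particular, if D_0 is a field, then D is E-simple. -/

import Mathlib

noncomputable def recip (D : Type*) [CommRing D] [IsDomain D] : Subring (FractionRing D) :=
  Subring.closure {x | ∃ d : D, d ≠ 0 ∧ x = (algebraMap D (FractionRing D) d)⁻¹}

/-!
In a domain graded by an ordered cancellative monoid the top homogeneous components multiply,
so the top degree is additive. For a grading by `Γ≥0` this makes `x ↦ exp (top degree of x)` a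
`Γ`-valued valuation on `D`, which extends to the fraction field. A reciprocal `1/e` has valuation
at most `1` because all degrees are nonnegative, so `R(D)` lies in the valuation ring; and the
elements of `D` in the valuation ring are exactly those of `D₀`. Thus every Egyptian element is
homogeneous of degree `0`.
-/

open DirectSum

namespace GradedRing

section TopDegree

variable {ι D σ : Type*} [DecidableEq ι] [AddCommMonoid ι] [Semiring D]
  [SetLike σ D] [AddSubmonoidClass σ D] (𝒜 : ι → σ) [GradedRing 𝒜]
  [∀ (i : ι) (x : 𝒜 i), Decidable (x ≠ 0)]

variable {x y : D}

lemma coe_decompose_mul_apply (n : ι) :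
    (decompose 𝒜 (x * y) n : D) =
      ∑ ab ∈ (decompose 𝒜 x).support ×ˢ (decompose 𝒜 y).support with ab.1 + ab.2 = n,
        (decompose 𝒜 x ab.1 * decompose 𝒜 y ab.2 : D) := by
  rw [decompose_mul]
  exact coe_mul_apply 𝒜 _ _ n

variable [LinearOrder ι]

noncomputable def topDegree (x : D) : WithBot ι := (decompose 𝒜 x).support.max

variable {𝒜} {i j : ι}

@[simp]
lemma topDegree_eq_bot_iff : topDegree 𝒜 x = ⊥ ↔ x = 0 := by
  rw [topDegree, Finset.max_eq_bot, DFinsupp.support_eq_empty, ← decompose_zero (ℳ := 𝒜),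
    (decompose 𝒜).injective.eq_iff]

@[simp]
lemma topDegree_zero : topDegree 𝒜 (0 : D) = ⊥ := topDegree_eq_bot_iff.mpr rfl

lemma exists_topDegree_eq (hx : x ≠ 0) : ∃ i : ι, topDegree 𝒜 x = i :=
  (WithBot.ne_bot_iff_exists.mp fun h => hx (topDegree_eq_bot_iff.mp h)).imp fun _ => Eq.symm

lemma le_topDegree (h : (decompose 𝒜 x i : D) ≠ 0) : (i : WithBot ι) ≤ topDegree 𝒜 x :=
  Finset.le_max (DFinsupp.mem_support_iff.mpr fun h0 => h (by simp [h0]))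

lemma coe_decompose_topDegree_ne_zero (h : topDegree 𝒜 x = i) :
    (decompose 𝒜 x i : D) ≠ 0 :=
  fun h0 => DFinsupp.mem_support_iff.mp (Finset.mem_of_max h) (Subtype.ext h0)

lemma topDegree_of_mem (hx : x ∈ 𝒜 i) (hx0 : x ≠ 0) : topDegree 𝒜 x = i := by
  have hx0' : (⟨x, hx⟩ : 𝒜 i) ≠ 0 := fun h => hx0 (congrArg Subtype.val h)
  rw [topDegree, decompose_of_mem 𝒜 hx, support_of i _ hx0', Finset.max_singleton]

lemma topDegree_add_le : topDegree 𝒜 (x + y) ≤ max (topDegree 𝒜 x) (topDegree 𝒜 y) := by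
  refine Finset.max_le fun a ha => ?_
  rw [decompose_add] at ha
  rcases Finset.mem_union.mp (DFinsupp.support_add ha) with h | h
  · exact (Finset.le_max h).trans (le_max_left _ _)
  · exact (Finset.le_max h).trans (le_max_right _ _)

lemma mem_of_topDegree_le_of_isBot (hi : IsBot i) (h : topDegree 𝒜 x ≤ i) : x ∈ 𝒜 i := by
  rw [← sum_support_decompose 𝒜 x, Finset.sum_eq_single i]
  · exact SetLike.coe_mem _
  · intro j hj hji
    have := WithBot.coe_le_coe.mp ((Finset.le_max hj).trans h)
    exact absurd (le_antisymm this (hi j)) hji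
  · intro hi_supp
    simp [DFinsupp.notMem_support_iff.mp hi_supp]

variable [IsOrderedCancelAddMonoid ι]

lemma topDegree_mul_le : topDegree 𝒜 (x * y) ≤ topDegree 𝒜 x + topDegree 𝒜 y := by
  refine Finset.max_le fun n hn => ?_
  have hn : (decompose 𝒜 (x * y) n : D) ≠ 0 :=
    fun h0 => DFinsupp.mem_support_iff.mp hn (Subtype.ext h0)
  rw [coe_decompose_mul_apply] at hn
  obtain ⟨⟨a, b⟩, hab, -⟩ := Finset.exists_ne_zero_of_sum_ne_zero hn
  simp only [Finset.mem_filter, Finset.mem_product] at hab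
  obtain ⟨⟨ha, hb⟩, rfl⟩ := hab
  rw [WithBot.coe_add]
  exact add_le_add (Finset.le_max ha) (Finset.le_max hb)

lemma coe_decompose_mul_of_topDegree_eq (hx : topDegree 𝒜 x = i) (hy : topDegree 𝒜 y = j) :
    (decompose 𝒜 (x * y) (i + j) : D) = decompose 𝒜 x i * decompose 𝒜 y j := by
  rw [coe_decompose_mul_apply, Finset.sum_eq_single_of_mem (i, j)]
  · simp [Finset.mem_of_max hx, Finset.mem_of_max hy]
  · rintro ⟨a, b⟩ hab hne
    simp only [Finset.mem_filter, Finset.mem_product] at hab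
    obtain ⟨⟨ha, hb⟩, hab⟩ := hab
    have := (add_eq_add_iff_eq_and_eq (Finset.le_max_of_eq ha hx)
      (Finset.le_max_of_eq hb hy)).mp hab
    simp_all

lemma topDegree_mul [NoZeroDivisors D] :
    topDegree 𝒜 (x * y) = topDegree 𝒜 x + topDegree 𝒜 y := by
  rcases eq_or_ne x 0 with rfl | hx
  · simp
  rcases eq_or_ne y 0 with rfl | hy
  · simp
  obtain ⟨i, hi⟩ := exists_topDegree_eq (𝒜 := 𝒜) hx
  obtain ⟨j, hj⟩ := exists_topDegree_eq (𝒜 := 𝒜) hy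
  refine topDegree_mul_le.antisymm ?_
  rw [hi, hj, ← WithBot.coe_add]
  refine le_topDegree ?_
  rw [coe_decompose_mul_of_topDegree_eq hi hj]
  exact mul_ne_zero (coe_decompose_topDegree_ne_zero hi)
    (coe_decompose_topDegree_ne_zero hj)

end TopDegree

section DegreeValuation

open WithZero

variable {Γ D σ : Type*} [AddCommGroup Γ] [LinearOrder Γ] [IsOrderedAddMonoid Γ] [DecidableEq Γ]
  [CommRing D] [IsDomain D] [SetLike σ D] [AddSubmonoidClass σ D]
  (𝒜 : {γ : Γ // 0 ≤ γ} → σ) [GradedRing 𝒜] [∀ i (x : 𝒜 i), Decidable (x ≠ 0)]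

noncomputable def degreeValuation : Valuation D Γᵐ⁰ where
  toFun x := (topDegree 𝒜 x).recBotCoe 0 fun i => exp (i : Γ)
  map_zero' := by simp
  map_one' := by rw [topDegree_of_mem SetLike.GradedOne.one_mem one_ne_zero]; rfl
  map_mul' x y := by
    simp only [topDegree_mul]
    cases topDegree 𝒜 x using WithBot.recBotCoe <;>
      cases topDegree 𝒜 y using WithBot.recBotCoe <;> simp [← WithBot.coe_add]
  map_add_le_max' x y := by
    have := topDegree_add_le (𝒜 := 𝒜) (x := x) (y := y)
    revert this
    cases topDegree 𝒜 (x + y) using WithBot.recBotCoe <;>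
      cases topDegree 𝒜 x using WithBot.recBotCoe <;>
      cases topDegree 𝒜 y using WithBot.recBotCoe <;> simp

variable {𝒜} {x : D}

lemma degreeValuation_of_topDegree_eq {i : {γ : Γ // 0 ≤ γ}} (h : topDegree 𝒜 x = i) :
    degreeValuation 𝒜 x = exp (i : Γ) := by
  simp [degreeValuation, h]

lemma one_le_degreeValuation (hx : x ≠ 0) : 1 ≤ degreeValuation 𝒜 x := by
  obtain ⟨i, hi⟩ := exists_topDegree_eq (𝒜 := 𝒜) hx
  rw [degreeValuation_of_topDegree_eq hi, ← exp_zero, exp_le_exp]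
  exact i.2

lemma degreeValuation_le_one_iff : degreeValuation 𝒜 x ≤ 1 ↔ x ∈ 𝒜 0 := by
  rcases eq_or_ne x 0 with rfl | hx
  · simp [zero_mem]
  obtain ⟨i, hi⟩ := exists_topDegree_eq (𝒜 := 𝒜) hx
  rw [degreeValuation_of_topDegree_eq hi, ← exp_zero, exp_le_exp]
  constructor
  · intro hi0
    refine mem_of_topDegree_le_of_isBot (fun j => show (0 : Γ) ≤ j from j.2) ?_
    rw [hi, WithBot.coe_le_coe]
    exact hi0
  · intro h0
    rw [topDegree_of_mem h0 hx, WithBot.coe_inj] at hi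
    rw [← hi]
    rfl

lemma nonZeroDivisors_le_primeCompl_supp_degreeValuation :
    nonZeroDivisors D ≤ (degreeValuation 𝒜).supp.primeCompl := fun _ hx =>
  (Valuation.mem_supp_iff _ _).not.mpr (zero_lt_one.trans_le
    (one_le_degreeValuation (nonZeroDivisors.ne_zero hx))).ne'

theorem mem_zero_of_algebraMap_mem_recip {d : D}
    (hd : algebraMap D (FractionRing D) d ∈ recip D) : d ∈ 𝒜 0 := by
  set w := (degreeValuation 𝒜).extendToLocalization
    nonZeroDivisors_le_primeCompl_supp_degreeValuation (FractionRing D)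
  have hrecip : recip D ≤ w.integer := by
    refine Subring.closure_le.mpr ?_
    rintro _ ⟨e, he, rfl⟩
    change w _ ≤ 1
    rw [map_inv₀, Valuation.extendToLocalization_apply_map_apply]
    exact inv_le_one_of_one_le₀ (one_le_degreeValuation he)
  rw [← degreeValuation_le_one_iff, ← Valuation.extendToLocalization_apply_map_apply
    (degreeValuation 𝒜) nonZeroDivisors_le_primeCompl_supp_degreeValuation (FractionRing D)]
  exact hrecip hd

end DegreeValuation

end GradedRing

theorem stmt_7 (Γ : Type*) [AddCommGroup Γ] [LinearOrder Γ] [IsOrderedAddMonoid Γ] [DecidableEq Γ]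
    (D : Type*) [CommRing D] [IsDomain D]
    (𝒜 : {γ : Γ // 0 ≤ γ} → AddSubgroup D) [GradedRing 𝒜] :
    (∀ (i : {γ : Γ // 0 ≤ γ}) (x : D), 0 < (i : Γ) → x ∈ 𝒜 i → x ≠ 0 →
      algebraMap D (FractionRing D) x ∉ recip D) ∧
    ((∀ x ∈ 𝒜 0, x ≠ 0 → IsUnit x) →
      ∀ d : D, d ≠ 0 → algebraMap D (FractionRing D) d ∈ recip D → IsUnit d) := by
  classical
  refine ⟨fun i x hi hx hx0 hx_recip => hi.ne' ?_, fun hunit d hd hd_recip =>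
    hunit d (GradedRing.mem_zero_of_algebraMap_mem_recip hd_recip) hd⟩
  have hx₀ : x ∈ 𝒜 0 := GradedRing.mem_zero_of_algebraMap_mem_recip hx_recip
  exact congrArg Subtype.val (degree_eq_of_mem_mem 𝒜 hx hx₀ hx0)
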